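/- arXiv:0909.4604 — 2 statements merged into one kernel-verified Lean document; each statement's English description precedes it below -/
import Mathlib

section
/- Let M, N, L1, L2 be positive integers and define J(M1, M2, N1, N2) = min{M1 + M2, N1 + N2, max(M1, N2), max(M2, N1)}. Then J(L1·M, L2·M, L1·N, L2·N) ≤ max( max(M,N)·min(L1,L2), min(M,N)·max(L1,L2) ). -/
/-- The total DoF of a two-user MIMO Gaussian interference channel with
`M1, M2` transmit antennas and `N1, N2` receive antennas. -/
def J (M1 M2 N1 N2 : ℕ) : ℕ :=
  min (M1 + M2) (min (N1 + N2) (min (max M1 N2) (max M2 N1)))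

theorem stmt_0 (M N L1 L2 : ℕ) (hM : 0 < M) (hN : 0 < N)
    (hL1 : 0 < L1) (hL2 : 0 < L2) :
    J (L1 * M) (L2 * M) (L1 * N) (L2 * N) ≤
      max (max M N * min L1 L2) (min M N * max L1 L2) := by
  unfold J
  refine le_trans (le_trans (min_le_right _ _) (min_le_right _ _)) ?_
  rcases le_total M N with h1 | h1 <;> rcases le_total L1 L2 with h2 | h2
  · refine le_trans (min_le_right _ _) (max_le ?_ ?_)
    · exact le_max_of_le_right (by rw [min_eq_left h1, max_eq_right h2, mul_comm])
    · exact le_max_of_le_left (by rw [max_eq_right h1, min_eq_left h2, mul_comm])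
  · refine le_trans (min_le_left _ _) (max_le ?_ ?_)
    · exact le_max_of_le_right (by rw [min_eq_left h1, max_eq_left h2, mul_comm])
    · exact le_max_of_le_left (by rw [max_eq_right h1, min_eq_right h2, mul_comm])
  · refine le_trans (min_le_left _ _) (max_le ?_ ?_)
    · exact le_max_of_le_left (by rw [max_eq_left h1, min_eq_left h2, mul_comm])
    · exact le_max_of_le_right (by rw [min_eq_right h1, max_eq_right h2, mul_comm])
  · refine le_trans (min_le_right _ _) (max_le ?_ ?_)
    · exact le_max_of_le_left (by rw [max_eq_left h1, min_eq_right h2, mul_comm])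
    · exact le_max_of_le_right (by rw [min_eq_right h1, max_eq_left h2, mul_comm])
end

section
/- Let M, N be positive integers, let g = gcd(M,N), and set L1 = min(M,N)/g and L2 = max(M,N)/g. Define J(M1, M2, N1, N2) = min{M1 + M2, N1 + N2, max(M1, N2), max(M2, N1)}. Then J(L1·M, L2·M, L1·N, L2·N) = M·N/g, and consequently, as rational numbers, J(L1·M, L2·M, L1·N, L2·N) / (L1 + L2) = M·N/(M+N). -/
lemma keyJ (x y z : ℕ) (h1 : x ≤ y) (h2 : y ≤ z) : J x y y z = y := by
  simp only [J]; omega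

lemma keyJ2 (x y z : ℕ) (h1 : x ≤ y) (h2 : y ≤ z) : J y z x y = y := by
  simp only [J]; omega

theorem stmt_3 (M N : ℕ) (hM : 0 < M) (hN : 0 < N)
    (g L1 L2 : ℕ) (hg : g = Nat.gcd M N)
    (hL1 : L1 = min M N / g) (hL2 : L2 = max M N / g) :
    J (L1 * M) (L2 * M) (L1 * N) (L2 * N) = M * N / g ∧
    ((J (L1 * M) (L2 * M) (L1 * N) (L2 * N) : ℚ) / (L1 + L2) = (M * N : ℚ) / (M + N)) := by
  have hg0 : 0 < g := hg ▸ Nat.gcd_pos_of_pos_left N hM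
  have hdM : g ∣ M := hg ▸ Nat.gcd_dvd_left M N
  have hdN : g ∣ N := hg ▸ Nat.gcd_dvd_right M N
  rcases le_total M N with h | h
  · have hL1' : L1 * g = M := by rw [hL1, min_eq_left h, Nat.div_mul_cancel hdM]
    have hL2' : L2 * g = N := by rw [hL2, max_eq_right h, Nat.div_mul_cancel hdN]
    have hL : L1 ≤ L2 := by
      rw [hL1, hL2, min_eq_left h, max_eq_right h]
      exact Nat.div_le_div_right h
    have hb : L2 * M = L1 * N := by rw [← hL1', ← hL2']; ring
    have hJ : J (L1 * M) (L2 * M) (L1 * N) (L2 * N) = L1 * N := by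
      rw [hb]
      exact keyJ _ _ _ (Nat.mul_le_mul_left _ h) (Nat.mul_le_mul_right _ hL)
    have hMN : M * N / g = L1 * N := by
      rw [← hL1', mul_right_comm, Nat.mul_div_cancel _ hg0]
    have hL1pos : 0 < L1 := by
      rcases Nat.eq_zero_or_pos L1 with h0 | h0
      · rw [h0, zero_mul] at hL1'; omega
      · exact h0
    refine ⟨by rw [hJ, hMN], ?_⟩
    have hne1 : (L1 : ℚ) + L2 ≠ 0 := by positivity
    have hne2 : (M : ℚ) + N ≠ 0 := by positivity
    rw [hJ, div_eq_div_iff hne1 hne2]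
    have hnat : L1 * N * (M + N) = M * N * (L1 + L2) := by
      rw [← hL1', ← hL2']; ring
    push_cast
    exact_mod_cast congrArg (Nat.cast : ℕ → ℚ) hnat
  · have hL1' : L1 * g = N := by rw [hL1, min_eq_right h, Nat.div_mul_cancel hdN]
    have hL2' : L2 * g = M := by rw [hL2, max_eq_left h, Nat.div_mul_cancel hdM]
    have hL : L1 ≤ L2 := by
      rw [hL1, hL2, min_eq_right h, max_eq_left h]
      exact Nat.div_le_div_right h
    have hb : L2 * N = L1 * M := by rw [← hL1', ← hL2']; ring
    have hJ : J (L1 * M) (L2 * M) (L1 * N) (L2 * N) = L1 * M := by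
      rw [hb]
      exact keyJ2 _ _ _ (Nat.mul_le_mul_left _ h) (Nat.mul_le_mul_right _ hL)
    have hMN : M * N / g = L1 * M := by
      rw [← hL1', mul_comm M, mul_right_comm, Nat.mul_div_cancel _ hg0]
    have hL1pos : 0 < L1 := by
      rcases Nat.eq_zero_or_pos L1 with h0 | h0
      · rw [h0, zero_mul] at hL1'; omega
      · exact h0
    refine ⟨by rw [hJ, hMN], ?_⟩
    have hne1 : (L1 : ℚ) + L2 ≠ 0 := by positivity
    have hne2 : (M : ℚ) + N ≠ 0 := by positivity
    rw [hJ, div_eq_div_iff hne1 hne2]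
    have hnat : L1 * M * (M + N) = M * N * (L1 + L2) := by
      rw [← hL1', ← hL2']; ring
    push_cast
    exact_mod_cast congrArg (Nat.cast : ℕ → ℚ) hnat
end
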